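/- Let R ⊆ Σ* and $ ∉ Σ. For every transition-based nondeterministic co-Büchi automaton A with L(A) = ⋈_$(R), there exists a nondeterministic finite automaton N with L(N) = R and |N| ≤ |A| + 1. Moreover, if R has a bad infix (a word x such that every word containing x as an infix is not in R), then |N| ≤ |A|. -/

import Mathlib

open Filter

variable {A Q : Type}

/-- Extension of a transition function to sets of states and finite words. -/
def extSet (δ : Q → A → Set Q) : Set Q → List A → Set Q
  | S, [] => S
  | S, a :: u => extSet δ (⋃ q ∈ S, δ q a) u

/-- A nondeterministic automaton on finite words (NFW), with a total
transition function. -/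
structure NFW (A Q : Type) where
  init : Set Q
  δ : Q → A → Set Q
  F : Set Q
  init_nonempty : init.Nonempty
  δ_nonempty : ∀ q a, (δ q a).Nonempty

/-- The language of finite words recognized by an NFW. -/
def NFW.Lang (N : NFW A Q) : Set (List A) :=
  {u | ∃ q ∈ extSet N.δ N.init u, q ∈ N.F}

/-- A transition-based nondeterministic co-Büchi automaton (tNCW). -/
structure tNCW (A Q : Type) where
  init : Set Q
  δ : Q → A → Set Q
  α : Set (Q × A × Q)
  init_nonempty : init.Nonempty
  δ_nonempty : ∀ q a, (δ q a).Nonempty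

namespace tNCW

/-- `L(A^q)`: words having a run from `q` traversing `α`-transitions only
finitely often. -/
def LangFrom (M : tNCW A Q) (q : Q) : Set (ℕ → A) :=
  {w | ∃ r : ℕ → Q, r 0 = q ∧ (∀ i, r (i + 1) ∈ M.δ (r i) (w i)) ∧
    ∀ᶠ i in atTop, (r i, w i, r (i + 1)) ∉ M.α}

def Lang (M : tNCW A Q) : Set (ℕ → A) :=
  {w | ∃ q ∈ M.init, w ∈ M.LangFrom q}

/-- Semantic determinism. -/
def SD (M : tNCW A Q) : Prop :=
  (∀ q₁ ∈ M.init, ∀ q₂ ∈ M.init, M.LangFrom q₁ = M.LangFrom q₂) ∧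
  ∀ q a, ∀ q₁ ∈ M.δ q a, ∀ q₂ ∈ M.δ q a, M.LangFrom q₁ = M.LangFrom q₂

end tNCW

/-- `w` has a suffix in `($·R)^ω`: there is an infinite increasing sequence
`f` of `$`-positions (`$` is `none`) such that, between any two consecutive
ones, the letters spell a word of `R`. -/
def HasDollarRSuffix (R : Set (List A)) (w : ℕ → Option A) : Prop :=
  ∃ f : ℕ → ℕ, StrictMono f ∧ ∀ k, w (f k) = none ∧
    ∃ x ∈ R, (List.ofFn fun t : Fin (f (k + 1) - (f k + 1)) => w (f k + 1 + t)) = x.map some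

/-- `⋈_$(R)`: the words over `Σ ∪ {$}` that either contain finitely many
`$`'s or have a suffix in `($·R)^ω`. -/
def Bowtie (R : Set (List A)) : Set (ℕ → Option A) :=
  {w | (∀ N, ∃ i, N ≤ i ∧ w i = none) → HasDollarRSuffix R w}

/-- `x` is a bad infix for `R`: every word containing `x` as an infix is not
in `R`. -/
def BadInfix (R : Set (List A)) (x : List A) : Prop := ∀ u, x <:+: u → u ∉ R

/-!
Call a transition of `M` safe if it is not in `α`. An accepting run on `($u)^ω` is eventually
safe and, `Q` being finite, revisits a state at two `$`-positions; so `u` is read inside one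
strongly connected component of the safe transitions, entered and left by safe `$`-transitions.
Conversely such a path closes into a reachable safe cycle through `$`, giving an accepted word
with infinitely many `$`s in which `$u$` occurs arbitrarily late, hence `u ∈ R`. The NFW
(`tNCW.safeNFA`) runs inside these components and is completed by a rejecting sink. If `x` is
a bad infix, a state on a safe cycle of a run on `x^ω` lies in no component reachable by the
NFW (else the resulting lasso would place `x` inside a word of `R`), so it can be the sink.
-/

section Run

variable {δ δ' : Q → A → Set Q}

def Run (δ : Q → A → Set Q) : Q → List A → Q → Prop
  | p, [], q => p = q
  | p, b :: u, q => ∃ p' ∈ δ p b, Run δ p' u q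

theorem run_singleton {p q : Q} {b : A} : Run δ p [b] q ↔ q ∈ δ p b := by
  simp [Run]

theorem Run.append {p q s : Q} {u v : List A} (h₁ : Run δ p u q) (h₂ : Run δ q v s) :
    Run δ p (u ++ v) s := by
  induction u generalizing p with
  | nil => subst h₁; exact h₂
  | cons b u ih =>
    obtain ⟨p', hp', h⟩ := h₁
    exact ⟨p', hp', ih h⟩

theorem Run.mono (hδ : ∀ q b, δ q b ⊆ δ' q b) {p q : Q} {u : List A} (h : Run δ p u q) :
    Run δ' p u q := by
  induction u generalizing p with
  | nil => exact h
  | cons b u ih =>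
    obtain ⟨p', hp', h⟩ := h
    exact ⟨p', hδ _ _ hp', ih h⟩

theorem Run.exists_stateFun {p q : Q} {u : List A} (h : Run δ p u q) :
    ∃ c : ℕ → Q, c 0 = p ∧ c u.length = q ∧
      ∀ t (ht : t < u.length), c (t + 1) ∈ δ (c t) u[t] := by
  induction u generalizing p with
  | nil => exact ⟨fun _ => p, rfl, h, fun t ht => absurd ht (Nat.not_lt_zero t)⟩
  | cons b u ih =>
    obtain ⟨p', hp', h⟩ := h
    obtain ⟨c, hc0, hcq, hc⟩ := ih h
    refine ⟨fun | 0 => p | t + 1 => c t, rfl, hcq, ?_⟩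
    rintro (_ | t) ht
    · simpa [hc0] using hp'
    · exact hc t (by simpa using ht)

theorem NFA.mem_evalFrom_singleton_iff_run {N : NFA A Q} {u : List A} {p q : Q} :
    q ∈ N.evalFrom {p} u ↔ Run N.step p u q := by
  induction u generalizing p with
  | nil => simp [Run, eq_comm]
  | cons b u ih =>
    rw [NFA.evalFrom_cons, NFA.stepSet_singleton, NFA.mem_evalFrom_iff_exists]
    simp only [Run, ih]

theorem NFA.mem_evalFrom_iff_run {N : NFA A Q} {S : Set Q} {u : List A} {q : Q} :
    q ∈ N.evalFrom S u ↔ ∃ p ∈ S, Run N.step p u q := by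
  rw [NFA.mem_evalFrom_iff_exists]
  simp only [NFA.mem_evalFrom_singleton_iff_run]

end Run

section Factor

variable (w : ℕ → A)

def factor (i n : ℕ) : List A := List.ofFn fun t : Fin n => w (i + t)

variable {w}

@[simp]
theorem length_factor (i n : ℕ) : (factor w i n).length = n := List.length_ofFn

theorem factor_succ (i n : ℕ) : factor w i (n + 1) = w i :: factor w (i + 1) n := by
  simp [factor, List.ofFn_succ, Nat.add_assoc, Nat.add_comm 1]

theorem factor_add (i m n : ℕ) : factor w i (m + n) = factor w i m ++ factor w (i + m) n := by
  simp [factor, List.ofFn_add, Nat.add_assoc]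

theorem factor_eq_append {i : ℕ} {l₁ l₂ : List A}
    (h : factor w i (l₁.length + l₂.length) = l₁ ++ l₂) :
    factor w i l₁.length = l₁ ∧ factor w (i + l₁.length) l₂.length = l₂ :=
  List.append_inj (factor_add i _ _ ▸ h) (length_factor _ _)

theorem mem_factor {i j n : ℕ} (h₁ : i ≤ j) (h₂ : j < i + n) : w j ∈ factor w i n :=
  List.mem_ofFn.2 ⟨⟨j - i, by omega⟩, by simp only; congr 1; omega⟩

theorem factor_infix {i j m n : ℕ} (h₁ : i ≤ j) (h₂ : j + n ≤ i + m) :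
    factor w j n <:+: factor w i m := by
  obtain ⟨k, rfl⟩ : ∃ k, m = (j - i) + n + k := ⟨m - (j - i) - n, by omega⟩
  rw [factor_add, factor_add, show i + (j - i) = j by omega]
  exact List.infix_append _ _ _

theorem run_factor {δ : Q → A → Set Q} {r : ℕ → Q} {s n : ℕ}
    (h : ∀ i, s ≤ i → i < s + n → r (i + 1) ∈ δ (r i) (w i)) :
    Run δ (r s) (factor w s n) (r (s + n)) := by
  induction n generalizing s with
  | zero => rfl
  | succ n ih =>
    rw [factor_succ, show s + (n + 1) = s + 1 + n by omega]
    exact ⟨r (s + 1), h s le_rfl (by omega), ih fun i hi hi' => h i (by omega) (by omega)⟩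

theorem factor_append_stream (v : List A) (i n : ℕ) :
    factor (v ++ₛ w) (i + v.length) n = factor w i n := by
  simp only [factor, Nat.add_right_comm i v.length]
  congr 1
  funext t
  exact congrFun (Stream'.drop_append_stream v w) (i + t)

end Factor

def periodicWord (z : List A) (hz : z ≠ []) : ℕ → A :=
  fun i => z[i % z.length]'(Nat.mod_lt _ (List.length_pos_iff.2 hz))

theorem factor_periodicWord (z : List A) (hz : z ≠ []) (k : ℕ) :
    factor (periodicWord z hz) (k * z.length) z.length = z := by
  refine List.ext_getElem (length_factor _ _) fun t ht _ => ?_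
  simp only [factor, periodicWord, List.getElem_ofFn]
  congr 1
  rw [Nat.add_comm, Nat.add_mul_mod_self_right, Nat.mod_eq_of_lt (by simpa using ht)]

theorem frequently_factor_append_periodicWord (v z : List A) (hz : z ≠ []) {l : List A}
    (hl : l <:+: z) (N : ℕ) :
    ∃ i ≥ N, factor (v ++ₛ periodicWord z hz) i l.length = l := by
  obtain ⟨s, t, rfl⟩ := hl
  have hN : N ≤ N * (s ++ l ++ t).length := Nat.le_mul_of_pos_right N (List.length_pos_iff.2 hz)
  refine ⟨N * (s ++ l ++ t).length + s.length + v.length, by omega, ?_⟩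
  rw [factor_append_stream]
  have h := factor_periodicWord (s ++ l ++ t) hz N
  have h' := (factor_eq_append (l₂ := t) (by rw [← List.length_append]; exact h)).1
  exact (factor_eq_append (by rw [← List.length_append]; exact h')).2

theorem Run.exists_periodic {δ : Q → A → Set Q} {q : Q} {z : List A}
    (h : Run δ q z q) (hz : z ≠ []) :
    ∃ r : ℕ → Q, r 0 = q ∧ ∀ i, r (i + 1) ∈ δ (r i) (periodicWord z hz i) := by
  obtain ⟨c, hc0, hcm, hc⟩ := h.exists_stateFun
  have hm := List.length_pos_iff.2 hz
  refine ⟨fun i => c (i % z.length), by simp [hc0], fun i => ?_⟩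
  have key : c ((i + 1) % z.length) = c (i % z.length + 1) := by
    have hi := Nat.mod_add_div i z.length
    obtain hlt | heq : i % z.length + 1 < z.length ∨ i % z.length + 1 = z.length := by
      have := Nat.mod_lt i hm
      omega
    · rw [show i + 1 = (i % z.length + 1) + z.length * (i / z.length) by omega,
        Nat.add_mul_mod_self_left, Nat.mod_eq_of_lt hlt]
    · rw [heq, show i + 1 = z.length * (i / z.length + 1) by rw [Nat.mul_add_one]; omega,
        Nat.mul_mod_right, hc0, hcm]
  simp only [key]
  exact hc _ _

section Bowtie

variable {R : Set (List A)} {w : ℕ → Option A}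

theorem HasDollarRSuffix.exists_block (hw : HasDollarRSuffix R w) :
    ∃ N, ∀ i ≥ N, ∀ n, none ∉ factor w i n → ∃ a b, ∃ u ∈ R,
      a < i ∧ i + n ≤ b ∧ factor w (a + 1) (b - (a + 1)) = u.map some := by
  obtain ⟨f, hf, hblk⟩ := hw
  refine ⟨f 0 + 1, fun i hi n hn => ?_⟩
  obtain ⟨k, hki, hik⟩ :=
    hf.exists_between_of_tendsto_atTop hf.tendsto_atTop (x := i) (by omega)
  obtain ⟨u, hu, hfac⟩ := (hblk k).2
  refine ⟨f k, f (k + 1), u, hu, hki, ?_, hfac⟩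
  by_contra! hlt
  exact hn ((hblk (k + 1)).1 ▸ mem_factor hik hlt)

theorem exists_infix_of_mem_bowtie (hw : w ∈ Bowtie R)
    (hinf : ∀ N, ∃ i, N ≤ i ∧ w i = none)
    {x : List A} (hx : ∀ N, ∃ i ≥ N, factor w i x.length = x.map some) :
    ∃ u ∈ R, x <:+: u := by
  obtain ⟨N, hN⟩ := (hw hinf).exists_block
  obtain ⟨i, hi, hxi⟩ := hx N
  obtain ⟨a, b, u, hu, hai, hib, hblock⟩ := hN i hi x.length (by simp [hxi])
  have hinfix : x.map some <:+: u.map some := hxi ▸ hblock ▸ factor_infix (by omega) (by omega)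
  obtain ⟨l, hl, hxl⟩ := List.infix_map_iff.1 hinfix
  exact ⟨u, hu, List.map_injective_iff.2 (Option.some_injective A) hxl ▸ hl⟩

theorem factor_eq_dollar_block {i : ℕ} {x : List A}
    (h : factor w i (x.length + 2) = none :: x.map some ++ [none]) :
    w i = none ∧ factor w (i + 1) x.length = x.map some ∧ w (i + 1 + x.length) = none := by
  rw [factor_succ, factor_add, factor_succ] at h
  simp only [List.cons_append, List.cons.injEq] at h
  obtain ⟨hfac, hend⟩ := List.append_inj h.2 (by simp)
  exact ⟨h.1, hfac, by simpa [factor] using hend⟩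

theorem mem_of_mem_bowtie (hw : w ∈ Bowtie R) {x : List A}
    (hx : ∀ N, ∃ i ≥ N, factor w i (x.length + 2) = none :: x.map some ++ [none]) :
    x ∈ R := by
  have hinf : ∀ N, ∃ i, N ≤ i ∧ w i = none := fun N =>
    let ⟨i, hi, h⟩ := hx N
    ⟨i, hi, (factor_eq_dollar_block h).1⟩
  obtain ⟨N, hN⟩ := (hw hinf).exists_block
  obtain ⟨i, hi, hxi⟩ := hx N
  obtain ⟨hstart, hfac, hend⟩ := factor_eq_dollar_block hxi
  obtain ⟨a, b, u, hu, hai, hib, hblock⟩ := hN (i + 1) (by omega) x.length (by simp [hfac])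
  have hsome : ∀ j, a < j → j < b → w j ≠ none := fun j h₁ h₂ hj => by
    have := mem_factor (w := w) (n := b - (a + 1)) (show a + 1 ≤ j by omega) (by omega)
    simp [hblock, hj] at this
  obtain rfl : a = i := by
    by_contra
    exact hsome i (by omega) (by omega) hstart
  obtain rfl : b = a + 1 + x.length := by
    by_contra
    exact hsome _ (by omega) (by omega) hend
  rw [Nat.add_sub_cancel_left, hfac] at hblock
  rwa [List.map_injective_iff.2 (Option.some_injective A) hblock]

def dollarCycle (u : List A) : ℕ → Option A :=
  periodicWord (none :: u.map some) (List.cons_ne_nil _ _)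

theorem dollarCycle_block (u : List A) (k : ℕ) :
    dollarCycle u (k * (u.length + 1)) = none ∧
      factor (dollarCycle u) (k * (u.length + 1) + 1) u.length = u.map some := by
  have h := factor_periodicWord (none :: u.map some) (List.cons_ne_nil _ _) k
  simp only [List.length_cons, List.length_map, factor_succ, List.cons.injEq] at h
  exact h

theorem dollarCycle_mem_bowtie {u : List A} (hu : u ∈ R) : dollarCycle u ∈ Bowtie R := by
  intro _
  refine ⟨fun k => k * (u.length + 1), fun a b hab => Nat.mul_lt_mul_of_pos_right hab
    (Nat.succ_pos _), fun k => ⟨(dollarCycle_block u k).1, u, hu, ?_⟩⟩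
  rw [show (k + 1) * (u.length + 1) - (k * (u.length + 1) + 1) = u.length by
    rw [Nat.succ_mul]; omega]
  exact (dollarCycle_block u k).2

end Bowtie

theorem exists_apply_eq_apply_of_finite [Finite Q] (g : ℕ → Q) (N d : ℕ) :
    ∃ a b, N ≤ a ∧ a + d ≤ b ∧ g a = g b := by
  obtain ⟨i, j, hij, h⟩ := Finite.exists_ne_map_eq_of_infinite fun k => g (N + k * d)
  wlog hlt : i < j generalizing i j
  · exact this j i hij.symm h.symm (by omega)
  have hd := Nat.mul_le_mul_right d (Nat.succ_le_of_lt hlt)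
  rw [Nat.succ_mul] at hd
  exact ⟨N + i * d, N + j * d, by omega, by omega, h⟩

namespace tNCW

variable (M : tNCW A Q)

def safeδ (q : Q) (a : A) : Set Q := {q' | q' ∈ M.δ q a ∧ (q, a, q') ∉ M.α}

def SafeReach (p q : Q) : Prop := ∃ y, Run M.safeδ p y q

def Reachable (q : Q) : Prop := ∃ p ∈ M.init, ∃ v, Run M.δ p v q

variable {M}

theorem SafeReach.trans {p q s : Q} (h₁ : M.SafeReach p q) (h₂ : M.SafeReach q s) :
    M.SafeReach p s :=
  let ⟨y₁, h₁⟩ := h₁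
  let ⟨y₂, h₂⟩ := h₂
  ⟨y₁ ++ y₂, h₁.append h₂⟩

theorem Reachable.of_safeReach {p q : Q} (hp : M.Reachable p) (h : M.SafeReach p q) :
    M.Reachable q := by
  obtain ⟨p₀, hp₀, v, hv⟩ := hp
  obtain ⟨y, hy⟩ := h
  exact ⟨p₀, hp₀, v ++ y, hv.append (hy.mono fun _ _ _ h => h.1)⟩

theorem cons_mem_langFrom {p q : Q} {a : A} {w : ℕ → A} (hq : q ∈ M.δ p a)
    (hw : w ∈ M.LangFrom q) : Stream'.cons a w ∈ M.LangFrom p := by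
  obtain ⟨r, rfl, hr, hsafe⟩ := hw
  obtain ⟨N, hN⟩ := eventually_atTop.1 hsafe
  refine ⟨Stream'.cons p r, rfl, ?_, eventually_atTop.2 ⟨N + 1, ?_⟩⟩
  · rintro (_ | i)
    exacts [hq, hr i]
  · rintro (_ | i) hi
    exacts [absurd hi (by omega), hN i (by omega)]

theorem append_mem_langFrom {p q : Q} {v : List A} {w : ℕ → A} (hv : Run M.δ p v q)
    (hw : w ∈ M.LangFrom q) : (v ++ₛ w) ∈ M.LangFrom p := by
  induction v generalizing p with
  | nil => subst hv; exact hw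
  | cons a v ih =>
    obtain ⟨p', hp', hv⟩ := hv
    exact cons_mem_langFrom hp' (ih hv)

theorem periodicWord_mem_langFrom {q : Q} {z : List A} (h : Run M.safeδ q z q) (hz : z ≠ []) :
    periodicWord z hz ∈ M.LangFrom q := by
  obtain ⟨r, hr0, hr⟩ := h.exists_periodic hz
  exact ⟨r, hr0, fun i => (hr i).1, Eventually.of_forall fun i => (hr i).2⟩

theorem exists_mem_lang_frequently_factor {q : Q} {z : List A} (hq : M.Reachable q)
    (h : Run M.safeδ q z q) (hz : z ≠ []) :
    ∃ w ∈ M.Lang, ∀ l, l <:+: z → ∀ N, ∃ i ≥ N, factor w i l.length = l := by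
  obtain ⟨p, hp, v, hv⟩ := hq
  exact ⟨v ++ₛ periodicWord z hz,
    ⟨p, hp, append_mem_langFrom hv (periodicWord_mem_langFrom h hz)⟩,
    fun _ hl => frequently_factor_append_periodicWord v z hz hl⟩

theorem exists_run_of_mem_lang {w : ℕ → A} (hw : w ∈ M.Lang) :
    ∃ r : ℕ → Q, ∃ I, (∀ s, M.Reachable (r s)) ∧
      ∀ s ≥ I, r (s + 1) ∈ M.safeδ (r s) (w s) := by
  obtain ⟨q, hq, r, rfl, hr, hsafe⟩ := hw
  obtain ⟨I, hI⟩ := eventually_atTop.1 hsafe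
  refine ⟨r, I, fun s => ⟨r 0, hq, factor w 0 s, ?_⟩, fun s hs => ⟨hr s, hI s hs⟩⟩
  simpa using run_factor (s := 0) (n := s) fun i _ _ => hr i

section SafeRun

variable {r : ℕ → Q} {w : ℕ → A} {I : ℕ}
  (hsafe : ∀ s ≥ I, r (s + 1) ∈ M.safeδ (r s) (w s))
include hsafe

theorem run_safeδ_factor {s : ℕ} (hs : I ≤ s) (n : ℕ) :
    Run M.safeδ (r s) (factor w s n) (r (s + n)) :=
  run_factor fun i h₁ _ => hsafe i (by omega)

theorem safeReach_of_le {s t : ℕ} (hs : I ≤ s) (hst : s ≤ t) : M.SafeReach (r s) (r t) :=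
  ⟨_, Nat.add_sub_cancel' hst ▸ run_safeδ_factor hsafe hs (t - s)⟩

end SafeRun

end tNCW

namespace tNCW

variable {M : tNCW (Option A) Q} {R : Set (List A)}

variable (M) in
def safeNFA : NFA A Q where
  step q a := {q' | q' ∈ M.safeδ q (some a) ∧ M.SafeReach q' q}
  start := {p | M.Reachable p ∧ ∃ q, p ∈ M.safeδ q none ∧ M.SafeReach p q}
  accept := {q | ∃ p ∈ M.safeδ q none, M.SafeReach p q}

theorem run_safeNFA_iff {p q : Q} {u : List A} :
    Run M.safeNFA.step p u q ↔ Run M.safeδ p (u.map some) q ∧ M.SafeReach q p := by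
  induction u generalizing p with
  | nil => exact ⟨fun h => ⟨h, h ▸ ⟨[], rfl⟩⟩, And.left⟩
  | cons a u ih =>
    constructor
    · rintro ⟨p', ⟨hp', hp'p⟩, h⟩
      obtain ⟨hrun, hqp'⟩ := ih.1 h
      exact ⟨⟨p', hp', hrun⟩, hqp'.trans hp'p⟩
    · rintro ⟨⟨p', hp', hrun⟩, hqp⟩
      exact ⟨p', ⟨hp', SafeReach.trans ⟨_, hrun⟩ hqp⟩,
        ih.2 ⟨hrun, hqp.trans ⟨[some a], run_singleton.2 hp'⟩⟩⟩

theorem mem_of_run_safeNFA (hL : M.Lang = Bowtie R) {p q : Q} {u : List A}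
    (hp : p ∈ M.safeNFA.start) (h : Run M.safeNFA.step p u q) (hq : q ∈ M.safeNFA.accept) :
    u ∈ R := by
  obtain ⟨hreach, q', hpq', hpq'_reach⟩ := hp
  obtain ⟨hrun, hqp⟩ := run_safeNFA_iff.1 h
  obtain ⟨p₂, hqp₂, hp₂q⟩ := hq
  obtain ⟨y, hy⟩ := hp₂q.trans (hqp.trans hpq'_reach)
  have hcycle : Run M.safeδ q' (none :: (u.map some ++ none :: y)) q' :=
    ⟨p, hpq', hrun.append ⟨p₂, hqp₂, hy⟩⟩
  obtain ⟨w, hw, hfreq⟩ := exists_mem_lang_frequently_factor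
    (hreach.of_safeReach hpq'_reach) hcycle (List.cons_ne_nil _ _)
  refine mem_of_mem_bowtie (hL ▸ hw) fun N => ?_
  have hlen : (none :: u.map some ++ [none]).length = u.length + 2 := by simp
  exact hlen ▸ hfreq _ ⟨[], y, by simp⟩ N

theorem exists_run_safeNFA [Finite Q] (hL : M.Lang = Bowtie R) {u : List A} (hu : u ∈ R) :
    ∃ p ∈ M.safeNFA.start, ∃ q ∈ M.safeNFA.accept, Run M.safeNFA.step p u q := by
  obtain ⟨r, I, hreach, hsafe⟩ := exists_run_of_mem_lang (hL ▸ dollarCycle_mem_bowtie hu :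
    dollarCycle u ∈ M.Lang)
  obtain ⟨k₀, k₁, hk₀, hk, heq⟩ :=
    exists_apply_eq_apply_of_finite (fun k => r (k * (u.length + 1))) I 2
  obtain ⟨hdollar, hfac⟩ := dollarCycle_block u k₀
  have hdollar' := (dollarCycle_block u (k₀ + 1)).1
  rw [show (k₀ + 1) * (u.length + 1) = k₀ * (u.length + 1) + 1 + u.length by ring] at hdollar'
  have hs : I ≤ k₀ * (u.length + 1) := hk₀.trans (Nat.le_mul_of_pos_right _ (Nat.succ_pos _))
  have hgap : k₀ * (u.length + 1) + 1 + u.length + 1 ≤ k₁ * (u.length + 1) := by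
    nlinarith [Nat.mul_le_mul_right (u.length + 1) hk]
  -- `$` is read at `s`, then `u`, then `$` again at `s + 1 + u.length`; `r t = r s`.
  generalize k₀ * (u.length + 1) = s at *
  generalize k₁ * (u.length + 1) = t at *
  have hback : ∀ j, s ≤ j → j ≤ t → M.SafeReach (r j) (r s) := fun j h₁ h₂ =>
    heq ▸ safeReach_of_le hsafe (hs.trans h₁) h₂
  have hfwd : ∀ j, s ≤ j → M.SafeReach (r s) (r j) := fun j h => safeReach_of_le hsafe hs h
  refine ⟨r (s + 1), ⟨hreach _, r s, hdollar ▸ hsafe s hs, hback _ (by omega) (by omega)⟩,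
    r (s + 1 + u.length), ⟨r (s + 1 + u.length + 1), ?_, ?_⟩, run_safeNFA_iff.2 ⟨?_, ?_⟩⟩
  · exact hdollar' ▸ hsafe _ (by omega)
  · exact (hback _ (by omega) (by omega)).trans (hfwd _ (by omega))
  · exact hfac ▸ run_safeδ_factor hsafe (by omega) _
  · exact (hback _ (by omega) (by omega)).trans (hfwd _ (by omega))

theorem mem_accepts_safeNFA [Finite Q] (hL : M.Lang = Bowtie R) {u : List A} :
    u ∈ M.safeNFA.accepts ↔ u ∈ R := by
  rw [NFA.mem_accepts]
  simp only [NFA.mem_evalFrom_iff_run]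
  constructor
  · rintro ⟨q, hq, p, hp, h⟩
    exact mem_of_run_safeNFA hL hp h hq
  · intro hu
    obtain ⟨p, hp, q, hq, h⟩ := exists_run_safeNFA hL hu
    exact ⟨q, hq, p, hp, h⟩

theorem exists_safe_cycle_with_prefix [Finite Q] (hL : M.Lang = Bowtie R) (x : List A) :
    ∃ d y, Run M.safeδ d (x.map some ++ y) d := by
  rcases eq_or_ne x [] with rfl | hx
  · obtain ⟨d, -⟩ := M.init_nonempty
    exact ⟨d, [], rfl⟩
  have hxs : x.map some ≠ [] := by simpa using hx
  have hw : periodicWord (x.map some) hxs ∈ Bowtie R := fun h => by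
    obtain ⟨i, -, hi⟩ := h 0
    simp [periodicWord] at hi
  obtain ⟨r, I, -, hsafe⟩ := exists_run_of_mem_lang (hL ▸ hw : _ ∈ M.Lang)
  obtain ⟨k₀, k₁, hk₀, hk, heq⟩ :=
    exists_apply_eq_apply_of_finite (fun k => r (k * (x.map some).length)) I 1
  have hs : I ≤ k₀ * (x.map some).length :=
    hk₀.trans (Nat.le_mul_of_pos_right _ (List.length_pos_iff.2 hxs))
  have hgap := Nat.mul_le_mul_right (x.map some).length hk
  rw [Nat.succ_mul] at hgap
  have hrun := run_safeδ_factor hsafe hs (x.map some).length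
  rw [factor_periodicWord] at hrun
  obtain ⟨y, hy⟩ := safeReach_of_le hsafe (by omega) hgap
  exact ⟨_, y, hrun.append (heq ▸ hy)⟩

theorem not_safeReach_of_badInfix (hL : M.Lang = Bowtie R) {x : List A} (hx : BadInfix R x)
    {d : Q} {y : List (Option A)} (hd : Run M.safeδ d (x.map some ++ y) d) {p : Q}
    (hp : p ∈ M.safeNFA.start) (hpd : M.SafeReach p d) : ¬ M.SafeReach d p := by
  rintro ⟨yb, hyb⟩
  obtain ⟨ya, hya⟩ := hpd
  obtain ⟨hreach, q, hqp, yc, hyc⟩ := hp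
  have hcycle : Run M.safeδ q (none :: (ya ++ (x.map some ++ y) ++ yb ++ yc)) q :=
    ⟨p, hqp, ((hya.append hd).append hyb).append hyc⟩
  obtain ⟨w, hw, hfreq⟩ := exists_mem_lang_frequently_factor
    (hreach.of_safeReach ⟨yc, hyc⟩) hcycle (List.cons_ne_nil _ _)
  have hinf : ∀ N, ∃ i, N ≤ i ∧ w i = none := fun N =>
    let ⟨i, hi, h⟩ := hfreq [none] ⟨[], _, rfl⟩ N
    ⟨i, hi, by simpa [factor] using h⟩
  obtain ⟨u, hu, hxu⟩ := exists_infix_of_mem_bowtie (hL ▸ hw) hinf fun N => by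
    simpa using hfreq (x.map some) ⟨none :: ya, y ++ yb ++ yc, by simp⟩ N
  exact hx u hxu hu

theorem exists_notMem_eval_safeNFA [Finite Q] (hL : M.Lang = Bowtie R) {x : List A}
    (hx : BadInfix R x) : ∃ d, ∀ u, d ∉ M.safeNFA.eval u := by
  obtain ⟨d, y, hd⟩ := exists_safe_cycle_with_prefix hL x
  refine ⟨d, fun u hu => ?_⟩
  obtain ⟨p, hp, hrun⟩ := NFA.mem_evalFrom_iff_run.1 hu
  obtain ⟨hpd, hdp⟩ := run_safeNFA_iff.1 hrun
  exact not_safeReach_of_badInfix hL hx hd hp ⟨_, hpd⟩ hdp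

end tNCW

namespace NFA

variable (N : NFA A Q)

def toNFW [DecidableEq Q] (d : Q) : NFW A Q where
  init := insert d N.start
  δ q a := if q = d then {d} else insert d (N.step q a)
  F := N.accept \ {d}
  init_nonempty := ⟨d, Set.mem_insert _ _⟩
  δ_nonempty q a := by split_ifs <;> exact ⟨d, by simp⟩

def liftOption : NFA A (Option Q) where
  step o a := o.elim ∅ fun q => some '' N.step q a
  start := some '' N.start
  accept := some '' N.accept

variable {N}

theorem extSet_toNFW [DecidableEq Q] {d : Q} {S : Set Q} (hd : ∀ v, d ∉ N.evalFrom S v)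
    (u : List A) : extSet (N.toNFW d).δ (insert d S) u = insert d (N.evalFrom S u) := by
  induction u generalizing S with
  | nil => rfl
  | cons a u ih =>
    have hstep : ⋃ q ∈ insert d S, (N.toNFW d).δ q a = insert d (N.stepSet S a) := by
      have hdS : d ∉ S := hd []
      ext q'
      simp only [toNFW, Set.mem_iUnion, Set.mem_insert_iff, NFA.mem_stepSet]
      constructor
      · rintro ⟨q, rfl | hq, hq'⟩
        · exact Or.inl (by simpa using hq')
        · rw [if_neg (ne_of_mem_of_not_mem hq hdS)] at hq'
          exact (Set.mem_insert_iff.1 hq').imp_right fun h => ⟨q, hq, h⟩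
      · rintro (rfl | ⟨q, hq, hq'⟩)
        · exact ⟨q', Or.inl rfl, by simp⟩
        · exact ⟨q, Or.inr hq, by rw [if_neg (ne_of_mem_of_not_mem hq hdS)]; exact Or.inr hq'⟩
    rw [extSet, hstep, ih fun v => hd (a :: v)]
    rfl

theorem mem_lang_toNFW [DecidableEq Q] {d : Q} (hd : ∀ u, d ∉ N.eval u) {u : List A} :
    u ∈ (N.toNFW d).Lang ↔ u ∈ N.accepts := by
  show (∃ q ∈ extSet (N.toNFW d).δ (insert d N.start) u, q ∈ N.accept \ {d}) ↔ _
  rw [extSet_toNFW hd, NFA.mem_accepts]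
  constructor
  · rintro ⟨q, rfl | hq, hqF, hqd⟩
    exacts [absurd rfl hqd, ⟨q, hqF, hq⟩]
  · rintro ⟨q, hqF, hq⟩
    exact ⟨q, Or.inr hq, hqF, fun h => hd u (h ▸ hq)⟩

theorem evalFrom_liftOption (S : Set Q) (u : List A) :
    N.liftOption.evalFrom (some '' S) u = some '' N.evalFrom S u := by
  induction u generalizing S with
  | nil => rfl
  | cons a u ih =>
    rw [NFA.evalFrom_cons, NFA.evalFrom_cons, ← ih]
    congr 1
    ext o
    simp only [NFA.mem_stepSet, Set.mem_image]
    constructor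
    · rintro ⟨_, ⟨q, hq, rfl⟩, q', hq', rfl⟩
      exact ⟨q', ⟨q, hq, hq'⟩, rfl⟩
    · rintro ⟨q', ⟨q, hq, hq'⟩, rfl⟩
      exact ⟨some q, ⟨q, hq, rfl⟩, q', hq', rfl⟩

theorem mem_accepts_liftOption {u : List A} : u ∈ N.liftOption.accepts ↔ u ∈ N.accepts := by
  show (∃ o ∈ some '' N.accept, o ∈ N.liftOption.evalFrom (some '' N.start) u) ↔ _
  rw [evalFrom_liftOption, NFA.mem_accepts]
  simp

theorem none_notMem_eval_liftOption (u : List A) : none ∉ N.liftOption.eval u := by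
  show none ∉ N.liftOption.evalFrom (some '' N.start) u
  rw [evalFrom_liftOption]
  simp

end NFA

/-- From any tNCW for `⋈_$(R)` one can obtain an NFW for `R` with at most one
extra state; if `R` has a bad infix, with no extra state at all. -/
theorem tncw_to_nfw [Fintype Q] (R : Set (List A)) (M : tNCW (Option A) Q)
    (hL : M.Lang = Bowtie R) :
    (∃ (Q' : Type) (_ : Fintype Q') (N : NFW A Q'),
        N.Lang = R ∧ Fintype.card Q' ≤ Fintype.card Q + 1) ∧
    ((∃ x, BadInfix R x) →
      ∃ (Q' : Type) (_ : Fintype Q') (N : NFW A Q'),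
        N.Lang = R ∧ Fintype.card Q' ≤ Fintype.card Q) := by
  classical
  have hR := fun u => M.mem_accepts_safeNFA hL (u := u)
  refine ⟨⟨Option Q, inferInstance, M.safeNFA.liftOption.toNFW none, ?_,
    (Fintype.card_option).le⟩, fun ⟨x, hx⟩ => ?_⟩
  · exact Set.ext fun u => (NFA.mem_lang_toNFW NFA.none_notMem_eval_liftOption).trans
      (NFA.mem_accepts_liftOption.trans (hR u))
  · obtain ⟨d, hd⟩ := tNCW.exists_notMem_eval_safeNFA hL hx
    exact ⟨Q, inferInstance, M.safeNFA.toNFW d,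
      Set.ext fun u => (NFA.mem_lang_toNFW hd).trans (hR u), le_rfl⟩
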